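/- arXiv:1809.10106 — 4 statements merged into one kernel-verified Lean document; each statement's English description precedes it below -/
import Mathlib

section
/- There exist a workflow authorization policy W = (S, ≼, U, A, C) and an integer budget t ≥ 0 such that W is statically resilient for budget t but W is not one-shot resilient for budget t. -/
/-- A workflow authorization policy `W = (S, ≼, U, A, C)`:
steps `S`, an ordering relation `ord` (the partial order `≼`), users `U`,
a step authorization relation `A ⊆ S × U`, and a set `C` of constraints.
A constraint is a pair `(T, Θ)` where `T ⊆ S` and `Θ` is a set of functions
from `T` to `U` (represented as `σ → Option υ` with domain exactly `T`). -/
structure WAP (σ υ : Type) where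
  S : Finset σ
  ord : σ → σ → Prop
  U : Finset υ
  A : Set (σ × υ)
  C : Set (Finset σ × Set (σ → Option υ))

namespace WAP

variable {σ υ : Type} [DecidableEq σ] [DecidableEq υ]

/-- Well-formedness: `ord` is a partial order on `S`, `A ⊆ S × U`, and every
constraint `(T, Θ)` has `T ⊆ S` and `Θ` a set of functions from `T` to `U`. -/
def WellFormed (W : WAP σ υ) : Prop :=
  (∀ s ∈ W.S, W.ord s s) ∧
  (∀ s₁ ∈ W.S, ∀ s₂ ∈ W.S, W.ord s₁ s₂ → W.ord s₂ s₁ → s₁ = s₂) ∧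
  (∀ s₁ ∈ W.S, ∀ s₂ ∈ W.S, ∀ s₃ ∈ W.S, W.ord s₁ s₂ → W.ord s₂ s₃ → W.ord s₁ s₃) ∧
  (∀ p ∈ W.A, p.1 ∈ W.S ∧ p.2 ∈ W.U) ∧
  (∀ c ∈ W.C, c.1 ⊆ W.S ∧
    ∀ θ ∈ c.2, (∀ s, θ s ≠ none ↔ s ∈ c.1) ∧ ∀ s u, θ s = some u → u ∈ W.U)

/-- A partial plan: a partial function from `S` to `U` whose domain is
causally closed (if `s₁` is assigned and `s₂ ≺ s₁` then `s₂` is assigned). -/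
def IsPartialPlan (W : WAP σ υ) (θ : σ → Option υ) : Prop :=
  (∀ s u, θ s = some u → s ∈ W.S ∧ u ∈ W.U) ∧
  ∀ s₁ s₂, s₁ ∈ W.S → s₂ ∈ W.S → θ s₁ ≠ none → W.ord s₂ s₁ → s₂ ≠ s₁ → θ s₂ ≠ none

/-- Restriction of a partial plan to a set `T` of steps. -/
def restrictTo (θ : σ → Option υ) (T : Finset σ) : σ → Option υ :=
  fun s => if s ∈ T then θ s else none

/-- Validity of a (partial) plan: every assignment is authorized, and every
constraint whose step set is contained in the domain is satisfied. -/
def Valid (W : WAP σ υ) (θ : σ → Option υ) : Prop :=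
  (∀ s u, θ s = some u → (s, u) ∈ W.A) ∧
  ∀ c ∈ W.C, (∀ s ∈ c.1, θ s ≠ none) → restrictTo θ c.1 ∈ c.2

/-- A plan: a partial plan whose domain is all of `S`. -/
def IsPlan (W : WAP σ υ) (θ : σ → Option υ) : Prop :=
  W.IsPartialPlan θ ∧ ∀ s ∈ W.S, θ s ≠ none

def IsValidPlan (W : WAP σ υ) (θ : σ → Option υ) : Prop :=
  W.IsPlan θ ∧ W.Valid θ

/-- `θ` assigns no user from `Δ`. -/
def Avoids (θ : σ → Option υ) (Δ : Finset υ) : Prop :=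
  ∀ s u, θ s = some u → u ∉ Δ

/-- Static resiliency for budget `t`. -/
def StaticallyResilient (W : WAP σ υ) (t : ℕ) : Prop :=
  ∀ Δ : Finset υ, Δ ⊆ W.U → Δ.card ≤ t → ∃ θ, W.IsValidPlan θ ∧ Avoids θ Δ

/-- A move of Player 1: assign a user `u ∈ U ∖ Δ` to a not-yet-assigned step,
so that the result remains a causally closed partial plan and remains valid
(if the extension were invalid, Player 2 would win at once). -/
def P1Move (W : WAP σ υ) (Δ : Finset υ) (θ θ' : σ → Option υ) : Prop :=
  ∃ s u, s ∈ W.S ∧ θ s = none ∧ u ∈ W.U ∧ u ∉ Δ ∧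
    θ' = Function.update θ s (some u) ∧
    W.IsPartialPlan θ' ∧ W.Valid θ'

/-- A move of Player 2 in the one-shot resiliency game: either pass, or
(if it has not yet struck) strike, adding at most `t` users of `U` to `Δ`. -/
def OneShotP2Move (W : WAP σ υ) (t : ℕ) (Δ : Finset υ) (struck : Bool)
    (Δ' : Finset υ) (struck' : Bool) : Prop :=
  (Δ' = Δ ∧ struck' = struck) ∨
  (struck = false ∧ struck' = true ∧ Δ ⊆ Δ' ∧ Δ' ⊆ W.U ∧ (Δ' \ Δ).card ≤ t)

/-- Player 1 can force a win of the one-shot resiliency game within `n`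
more rounds, from the given configuration (`struck` records whether
Player 2 has already struck).  Player 1 has won once the (valid) partial
plan has been extended to a valid plan on all of `S`; otherwise, for every
move of Player 2 there must be a move of Player 1 from which Player 1 can
still force a win.  Since each round assigns one more step, the game from
the initial configuration lasts at most `|S|` rounds. -/
def OneShotWins (W : WAP σ υ) (t : ℕ) :
    ℕ → Finset υ → (σ → Option υ) → Bool → Prop
  | 0, _, θ, _ => (∀ s ∈ W.S, θ s ≠ none) ∧ W.IsPartialPlan θ ∧ W.Valid θ
  | n + 1, Δ, θ, struck =>
      ((∀ s ∈ W.S, θ s ≠ none) ∧ W.IsPartialPlan θ ∧ W.Valid θ) ∨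
      ((∃ s ∈ W.S, θ s = none) ∧
        ∀ Δ' struck', OneShotP2Move W t Δ struck Δ' struck' →
          ∃ θ', P1Move W Δ' θ θ' ∧ OneShotWins W t n Δ' θ' struck')

/-- One-shot resiliency for budget `t`: Player 1 wins the one-shot
resiliency game (from the initial configuration `(∅, ∅)`) no matter how
Player 2 plays. -/
def OneShotResilient (W : WAP σ υ) (t : ℕ) : Prop :=
  OneShotWins W t W.S.card ∅ (fun _ => none) false

/-- A move of Player 2 in the decremental resiliency game: add zero or more
users of `U` to `Δ`, subject to `|Δ| ≤ t` throughout. -/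
def DecP2Move (W : WAP σ υ) (t : ℕ) (Δ Δ' : Finset υ) : Prop :=
  Δ ⊆ Δ' ∧ Δ' ⊆ W.U ∧ Δ'.card ≤ t

/-- Player 1 can force a win of the decremental resiliency game within `n`
more rounds. -/
def DecWins (W : WAP σ υ) (t : ℕ) : ℕ → Finset υ → (σ → Option υ) → Prop
  | 0, _, θ => (∀ s ∈ W.S, θ s ≠ none) ∧ W.IsPartialPlan θ ∧ W.Valid θ
  | n + 1, Δ, θ =>
      ((∀ s ∈ W.S, θ s ≠ none) ∧ W.IsPartialPlan θ ∧ W.Valid θ) ∨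
      ((∃ s ∈ W.S, θ s = none) ∧
        ∀ Δ', DecP2Move W t Δ Δ' →
          ∃ θ', P1Move W Δ' θ θ' ∧ DecWins W t n Δ' θ')

/-- Decremental resiliency for budget `t`: Player 1 wins the decremental
resiliency game no matter how Player 2 plays. -/
def DecrementallyResilient (W : WAP σ υ) (t : ℕ) : Prop :=
  DecWins W t W.S.card ∅ (fun _ => none)

end WAP

/-!
Take binding of duty on unordered steps: every step must be performed by one and the same
user. Statically, striking `t < |U|` users leaves a user who can perform every step. In the
one-shot game, however, Player 2 passes until Player 1 has assigned a user `u` to one of two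
steps and then strikes `u` alone: the other step must now go to a different user, which breaks
the binding of duty.
-/

namespace WAP

variable {σ υ : Type} [DecidableEq σ]

section OneShotGame

variable [DecidableEq υ] {W : WAP σ υ} {t : ℕ} {Δ : Finset υ} {θ : σ → Option υ}

theorem not_oneShotWins_of_strike {Δ' : Finset υ} (hθ : ∃ s ∈ W.S, θ s = none)
    (hΔΔ' : Δ ⊆ Δ') (hΔ'U : Δ' ⊆ W.U) (hcard : (Δ' \ Δ).card ≤ t)
    (hstuck : ∀ θ', ¬ P1Move W Δ' θ θ') (n : ℕ) : ¬ OneShotWins W t n Δ θ false := by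
  obtain ⟨s, hs, hθs⟩ := hθ
  cases n with
  | zero => exact fun hwin => hwin.1 s hs hθs
  | succ n =>
    rintro (⟨htotal, -⟩ | ⟨-, hwin⟩)
    · exact htotal s hs hθs
    · obtain ⟨θ', hmove, -⟩ := hwin Δ' true (Or.inr ⟨rfl, rfl, hΔΔ', hΔ'U, hcard⟩)
      exact hstuck θ' hmove

theorem not_oneShotWins_of_pass {struck : Bool} (hθ : ∃ s ∈ W.S, θ s = none)
    (hlose : ∀ θ', P1Move W Δ θ θ' → ∀ m, ¬ OneShotWins W t m Δ θ' struck) (n : ℕ) :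
    ¬ OneShotWins W t n Δ θ struck := by
  obtain ⟨s, hs, hθs⟩ := hθ
  cases n with
  | zero => exact fun hwin => hwin.1 s hs hθs
  | succ n =>
    rintro (⟨htotal, -⟩ | ⟨-, hwin⟩)
    · exact htotal s hs hθs
    · obtain ⟨θ', hmove, hwin'⟩ := hwin Δ struck (Or.inl ⟨rfl, rfl⟩)
      exact hlose θ' hmove n hwin'

end OneShotGame

def constPlan (T : Finset σ) (u : υ) : σ → Option υ :=
  fun s => if s ∈ T then some u else none

theorem constPlan_eq_some {T : Finset σ} {u v : υ} {s : σ} :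
    constPlan T u s = some v ↔ s ∈ T ∧ u = v := by
  unfold constPlan
  split_ifs with hs <;> simp [hs]

theorem restrictTo_constPlan (T : Finset σ) (u : υ) :
    restrictTo (constPlan T u) T = constPlan T u := by
  funext s
  unfold restrictTo constPlan
  split_ifs <;> rfl

def bindingOfDuty (S : Finset σ) (U : Finset υ) : WAP σ υ where
  S := S
  ord := Eq
  U := U
  A := {p | p.1 ∈ S ∧ p.2 ∈ U}
  C := {(S, constPlan S '' U)}

section BindingOfDuty

variable {S : Finset σ} {U : Finset υ}

theorem wellFormed_bindingOfDuty : (bindingOfDuty S U).WellFormed := by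
  refine ⟨fun _ _ => rfl, fun _ _ _ _ h _ => h, fun _ _ _ _ _ _ h h' => h.trans h',
    fun _ hp => hp, ?_⟩
  rintro c rfl
  refine ⟨subset_rfl, ?_⟩
  rintro θ ⟨u, hu, rfl⟩
  refine ⟨fun s => ?_, fun s v hv => ?_⟩
  · by_cases hs : s ∈ S <;> simp [constPlan, hs]
  · obtain ⟨-, rfl⟩ := constPlan_eq_some.1 hv
    exact hu

theorem isValidPlan_bindingOfDuty_constPlan {u : υ} (hu : u ∈ U) :
    (bindingOfDuty S U).IsValidPlan (constPlan S u) := by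
  have hassigned : ∀ s v, constPlan S u s = some v → s ∈ S ∧ v ∈ U := by
    intro s v hv
    obtain ⟨hs, rfl⟩ := constPlan_eq_some.1 hv
    exact ⟨hs, hu⟩
  refine ⟨⟨⟨hassigned, fun _ _ _ _ _ h hne => absurd h hne⟩, ?_⟩, hassigned, ?_⟩
  · intro s (hs : s ∈ S)
    simp [constPlan, hs]
  · rintro c rfl -
    exact ⟨u, hu, (restrictTo_constPlan S u).symm⟩

theorem staticallyResilient_bindingOfDuty [DecidableEq υ] {t : ℕ} (ht : t < U.card) :
    (bindingOfDuty S U).StaticallyResilient t := by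
  intro Δ _ hΔ
  obtain ⟨u, hu, huΔ⟩ := Finset.exists_mem_notMem_of_card_lt_card (hΔ.trans_lt ht)
  refine ⟨constPlan S u, isValidPlan_bindingOfDuty_constPlan hu, fun s v hv => ?_⟩
  obtain ⟨-, rfl⟩ := constPlan_eq_some.1 hv
  exact huΔ

theorem bindingOfDuty_eq_of_valid {θ : σ → Option υ} (hθ : (bindingOfDuty S U).Valid θ)
    (htotal : ∀ s ∈ S, θ s ≠ none) {s s' : σ} (hs : s ∈ S) (hs' : s' ∈ S) : θ s = θ s' := by
  obtain ⟨u, -, hrestrict⟩ := hθ.2 _ rfl htotal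
  have hθ_eq : ∀ x ∈ S, θ x = some u := fun x hx => by
    simpa [restrictTo, constPlan, hx] using (congrFun hrestrict x).symm
  rw [hθ_eq s hs, hθ_eq s' hs']

theorem not_oneShotResilient_bindingOfDuty_pair [DecidableEq υ] {a b : σ} (hab : a ≠ b)
    {t : ℕ} (ht : 1 ≤ t) : ¬ (bindingOfDuty {a, b} U).OneShotResilient t := by
  have hpair : ∀ {x s s'}, x ∈ ({a, b} : Finset σ) → s ∈ ({a, b} : Finset σ) →
      s' ∈ ({a, b} : Finset σ) → s ≠ s' → x = s ∨ x = s' := by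
    simp only [Finset.mem_insert, Finset.mem_singleton]
    grind
  refine not_oneShotWins_of_pass ⟨a, Finset.mem_insert_self a {b}, rfl⟩ ?_ _
  rintro θ ⟨s, u, hs, -, hu, -, rfl, -⟩ m
  refine not_oneShotWins_of_strike (Δ' := {u}) ?_ (Finset.empty_subset _)
    (Finset.singleton_subset_iff.2 hu) (by simpa using ht) ?_ m
  · by_cases hsa : s = a
    · exact ⟨b, Finset.mem_insert_of_mem (Finset.mem_singleton_self b), by simp [hsa, hab.symm]⟩
    · exact ⟨a, Finset.mem_insert_self a {b}, by simp [Ne.symm hsa]⟩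
  · rintro θ' ⟨s', u', hs', hfree, -, hu', rfl, -, hvalid⟩
    have hss' : s ≠ s' := by
      rintro rfl
      simp at hfree
    have htotal : ∀ x ∈ ({a, b} : Finset σ),
        Function.update (Function.update (fun _ => none) s (some u)) s' (some u') x ≠ none := by
      intro x hx
      rcases hpair hx hs hs' hss' with rfl | rfl <;> simp [hss']
    have huu' := bindingOfDuty_eq_of_valid hvalid htotal hs hs'
    simp [hss'] at huu'
    exact hu' (by simp [huu'])

end BindingOfDuty

end WAP

/-- There exist a workflow authorization policy `W` and a
budget `t ≥ 0` such that `W` is statically resilient for budget `t` but not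
one-shot resilient for budget `t`. -/
theorem exists_statically_resilient_not_oneShot_resilient :
    ∃ (W : WAP ℕ ℕ) (t : ℕ), W.WellFormed ∧
      W.StaticallyResilient t ∧ ¬ W.OneShotResilient t :=
  ⟨WAP.bindingOfDuty {0, 1} {0, 1}, 1, WAP.wellFormed_bindingOfDuty,
    WAP.staticallyResilient_bindingOfDuty (by decide),
    WAP.not_oneShotResilient_bindingOfDuty_pair zero_ne_one le_rfl⟩
end

section
/- There exist a workflow authorization policy W = (S, ≼, U, A, C) and an integer budget t ≥ 0 such that W is one-shot resilient for budget t but W is not decrementally resilient for budget t. -/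
/-!
The counterexample has two unordered steps and users `0, …, 7`, and its only constraint asks
the users on steps 1 and 2 to form one of the pairs `(0,3), (0,4), (0,5), (1,6), (2,7)`.
Against a one-shot adversary Player 1 waits: a strike of two users before the first move cannot
block all five pairs, and if Player 2 passes, Player 1 puts user 0 on step 1, whose three partners
cannot all be struck later. A decremental adversary removes user 0 at once and, after Player 1's
first assignment, the assigned user's remaining partner (there is at most one), so that budget 2
suffices to make the plan impossible to complete.
-/

namespace WAP

theorem restrictTo_eq_self {σ υ : Type} [DecidableEq σ] {θ : σ → Option υ} {T : Finset σ}
    (h : ∀ s ∉ T, θ s = none) : restrictTo θ T = θ := by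
  funext s
  by_cases hs : s ∈ T <;> simp [restrictTo, hs, h]

theorem isPartialPlan_of_ord_eq {σ υ : Type} {W : WAP σ υ} (hord : ∀ s₁ s₂, W.ord s₁ s₂ → s₁ = s₂)
    {θ : σ → Option υ} (h : ∀ s u, θ s = some u → s ∈ W.S ∧ u ∈ W.U) : W.IsPartialPlan θ :=
  ⟨h, fun _ _ _ _ _ h₂₁ hne => absurd (hord _ _ h₂₁) hne⟩

theorem OneShotP2Move.card_le {σ υ : Type} [DecidableEq υ] {W : WAP σ υ} {t : ℕ}
    {Δ Δ' : Finset υ} {struck struck' : Bool} (h : OneShotP2Move W t Δ struck Δ' struck') :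
    Δ'.card ≤ Δ.card + t := by
  rcases h with ⟨rfl, -⟩ | ⟨-, -, -, -, hcard⟩
  · omega
  · have := Finset.card_le_card_sdiff_add_card (s := Δ') (t := Δ)
    omega

theorem OneShotP2Move.eq_of_struck {σ υ : Type} [DecidableEq υ] {W : WAP σ υ} {t : ℕ}
    {Δ Δ' : Finset υ} {struck' : Bool} (h : OneShotP2Move W t Δ true Δ' struck') :
    Δ' = Δ ∧ struck' = true := by
  rcases h with h | ⟨h, -⟩
  · exact h
  · cases h

theorem oneShotWins_of_isValidPlan {σ υ : Type} [DecidableEq σ] [DecidableEq υ] {W : WAP σ υ}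
    {t : ℕ} {Δ : Finset υ} {θ : σ → Option υ} {struck : Bool} (hθ : W.IsValidPlan θ) :
    ∀ n, OneShotWins W t n Δ θ struck
  | 0 => ⟨hθ.1.2, hθ.1.1, hθ.2⟩
  | _ + 1 => Or.inl ⟨hθ.1.2, hθ.1.1, hθ.2⟩

end WAP

namespace OneShotNotDecremental

open WAP

def compatiblePairs : Finset (ℕ × ℕ) := {(0, 3), (0, 4), (0, 5), (1, 6), (2, 7)}

def partner : ℕ → ℕ
  | 1 => 6
  | 6 => 1
  | 2 => 7
  | 7 => 2
  | _ => 0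

theorem lt_eight_of_mem_compatiblePairs : ∀ p ∈ compatiblePairs, p.1 < 8 ∧ p.2 < 8 := by
  decide

theorem partner_eq_of_mem_compatiblePairs :
    ∀ p ∈ compatiblePairs, p.1 ≠ 0 → partner p.1 = p.2 ∧ partner p.2 = p.1 := by
  decide

theorem exists_zero_compatible_not_mem {Δ : Finset ℕ} (hΔ : Δ.card ≤ 2) :
    ∃ b ∉ Δ, ((0 : ℕ), b) ∈ compatiblePairs := by
  obtain ⟨b, hb, hbΔ⟩ := Finset.exists_mem_notMem_of_card_lt_card
    (s := Δ) (t := {3, 4, 5}) (by rw [show ({3, 4, 5} : Finset ℕ).card = 3 by rfl]; omega)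
  refine ⟨b, hbΔ, ?_⟩
  simp only [Finset.mem_insert, Finset.mem_singleton] at hb
  rcases hb with rfl | rfl | rfl <;> decide

theorem exists_compatible_not_mem {Δ : Finset ℕ} (hΔ : Δ.card ≤ 2) :
    ∃ a b, (a, b) ∈ compatiblePairs ∧ a ∉ Δ ∧ b ∉ Δ := by
  by_cases h0 : 0 ∈ Δ
  · -- `Δ` has room for one more user, which cannot block both `(1, 6)` and `(2, 7)`
    by_contra! hblock
    obtain ⟨x, hx, hx16⟩ : ∃ x ∈ Δ, x = 1 ∨ x = 6 := by
      by_cases h1 : 1 ∈ Δ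
      · exact ⟨1, h1, .inl rfl⟩
      · exact ⟨6, hblock 1 6 (by decide) h1, .inr rfl⟩
    obtain ⟨y, hy, hy27⟩ : ∃ y ∈ Δ, y = 2 ∨ y = 7 := by
      by_cases h2 : 2 ∈ Δ
      · exact ⟨2, h2, .inl rfl⟩
      · exact ⟨7, hblock 2 7 (by decide) h2, .inr rfl⟩
    have : 2 < Δ.card := Finset.two_lt_card.2 ⟨0, h0, x, hx, y, hy, by omega, by omega, by omega⟩
    omega
  · obtain ⟨b, hbΔ, hb⟩ := exists_zero_compatible_not_mem hΔ
    exact ⟨0, b, hb, h0, hbΔ⟩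

def firstStep (a : ℕ) : ℕ → Option ℕ := Function.update (fun _ => none) 1 (some a)

def plan (a b : ℕ) : ℕ → Option ℕ := Function.update (firstStep a) 2 (some b)

theorem firstStep_apply (a s : ℕ) : firstStep a s = if s = 1 then some a else none := by
  simp [firstStep, Function.update_apply]

theorem plan_apply (a b s : ℕ) :
    plan a b s = if s = 2 then some b else if s = 1 then some a else none := by
  simp [plan, Function.update_apply, firstStep_apply]

def allowedPlans : Set (ℕ → Option ℕ) := {θ | ∃ p ∈ compatiblePairs, θ = plan p.1 p.2}

def policy : WAP ℕ ℕ where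
  S := {1, 2}
  ord := Eq
  U := Finset.range 8
  A := {p | p.1 ∈ ({1, 2} : Finset ℕ) ∧ p.2 < 8}
  C := {({1, 2}, allowedPlans)}

theorem partner_lt_eight (u : ℕ) : partner u < 8 := by
  unfold partner
  split <;> decide

theorem isPartialPlan_and_valid {θ : ℕ → Option ℕ}
    (hsupp : ∀ s u, θ s = some u → s ∈ ({1, 2} : Finset ℕ) ∧ u < 8)
    (hcons : θ 1 ≠ none → θ 2 ≠ none → restrictTo θ {1, 2} ∈ allowedPlans) :
    policy.IsPartialPlan θ ∧ policy.Valid θ := by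
  refine ⟨isPartialPlan_of_ord_eq (fun _ _ h => h) fun s u h => ?_, hsupp, fun c hc hdom => ?_⟩
  · simpa [policy] using hsupp s u h
  · obtain rfl : c = ({1, 2}, allowedPlans) := hc
    exact hcons (hdom 1 (by simp)) (hdom 2 (by simp))

theorem isPartialPlan_and_valid_firstStep {a : ℕ} (ha : a < 8) :
    policy.IsPartialPlan (firstStep a) ∧ policy.Valid (firstStep a) := by
  refine isPartialPlan_and_valid (fun s u h => ?_) fun _ h₂ => absurd (by simp [firstStep_apply]) h₂
  rw [firstStep_apply] at h
  split_ifs at h with hs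
  cases h
  simp [hs, ha]

theorem isValidPlan_plan {a b : ℕ} (hab : (a, b) ∈ compatiblePairs) :
    policy.IsValidPlan (plan a b) := by
  obtain ⟨ha, hb⟩ := lt_eight_of_mem_compatiblePairs _ hab
  have hsupp : ∀ s u, plan a b s = some u → s ∈ ({1, 2} : Finset ℕ) ∧ u < 8 := by
    intro s u h
    rw [plan_apply] at h
    split_ifs at h with h₂ h₁ <;> cases h <;> simp [*]
  obtain ⟨hpp, hvalid⟩ := isPartialPlan_and_valid hsupp fun _ _ =>
    ⟨(a, b), hab, restrictTo_eq_self fun s hs => by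
      simp only [Finset.mem_insert, Finset.mem_singleton, not_or] at hs
      simp [plan_apply, hs]⟩
  refine ⟨⟨hpp, fun s hs => ?_⟩, hvalid⟩
  rcases (by simpa [policy] using hs : s = 1 ∨ s = 2) with rfl | rfl <;> simp [plan_apply]

theorem p1Move_firstStep {Δ : Finset ℕ} {a : ℕ} (ha : a < 8) (haΔ : a ∉ Δ) :
    P1Move policy Δ (fun _ => none) (firstStep a) :=
  ⟨1, a, by simp [policy], rfl, by simpa [policy], haΔ, rfl, isPartialPlan_and_valid_firstStep ha⟩

theorem p1Move_plan {Δ : Finset ℕ} {a b : ℕ} (hab : (a, b) ∈ compatiblePairs) (hbΔ : b ∉ Δ) :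
    P1Move policy Δ (firstStep a) (plan a b) :=
  ⟨2, b, by simp [policy], by simp [firstStep_apply],
    by simpa [policy] using (lt_eight_of_mem_compatiblePairs _ hab).2, hbΔ, rfl,
    (isValidPlan_plan hab).1.1, (isValidPlan_plan hab).2⟩

theorem oneShotWins_firstStep_of_struck {t : ℕ} {Δ : Finset ℕ} {a b : ℕ}
    (hab : (a, b) ∈ compatiblePairs) (hbΔ : b ∉ Δ) :
    OneShotWins policy t 1 Δ (firstStep a) true := by
  refine Or.inr ⟨⟨2, by simp [policy], by simp [firstStep_apply]⟩, fun Δ' struck' hmove => ?_⟩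
  obtain ⟨rfl, rfl⟩ := hmove.eq_of_struck
  exact ⟨plan a b, p1Move_plan hab hbΔ, oneShotWins_of_isValidPlan (isValidPlan_plan hab) 0⟩

theorem oneShotWins_firstStep_zero : OneShotWins policy 2 1 ∅ (firstStep 0) false := by
  refine Or.inr ⟨⟨2, by simp [policy], by simp [firstStep_apply]⟩, fun Δ' struck' hmove => ?_⟩
  obtain ⟨b, hbΔ, hb⟩ := exists_zero_compatible_not_mem (by simpa using hmove.card_le)
  exact ⟨plan 0 b, p1Move_plan hb hbΔ, oneShotWins_of_isValidPlan (isValidPlan_plan hb) 0⟩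

theorem oneShotResilient : policy.OneShotResilient 2 := by
  refine Or.inr ⟨⟨1, by simp [policy], rfl⟩, fun Δ struck hmove => ?_⟩
  rcases hmove with ⟨rfl, rfl⟩ | ⟨-, rfl, -, -, hcard⟩
  · exact ⟨firstStep 0, p1Move_firstStep (by decide) (Finset.notMem_empty 0),
      oneShotWins_firstStep_zero⟩
  · obtain ⟨a, b, hab, haΔ, hbΔ⟩ := exists_compatible_not_mem (by simpa using hcard)
    exact ⟨firstStep a, p1Move_firstStep (lt_eight_of_mem_compatiblePairs _ hab).1 haΔ,
      oneShotWins_firstStep_of_struck hab hbΔ⟩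

theorem wellFormed : policy.WellFormed := by
  refine ⟨fun _ _ => rfl, fun _ _ _ _ h _ => h, fun _ _ _ _ _ _ h h' => h.trans h', ?_, ?_⟩
  · rintro ⟨s, u⟩ ⟨hs, hu⟩
    exact ⟨hs, Finset.mem_range.2 hu⟩
  · rintro c rfl
    refine ⟨subset_rfl, ?_⟩
    rintro θ ⟨⟨a, b⟩, hab, rfl⟩
    have := lt_eight_of_mem_compatiblePairs _ hab
    refine ⟨fun s => ?_, fun s u h => ?_⟩
    · simp only [plan_apply]
      split_ifs <;> simp_all
    · rw [plan_apply] at h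
      split_ifs at h <;> cases h <;> simp [policy, this]

theorem exists_compatible_of_valid {θ : ℕ → Option ℕ} (hfull : ∀ s ∈ policy.S, θ s ≠ none)
    (hvalid : policy.Valid θ) : ∃ a b, (a, b) ∈ compatiblePairs ∧ θ 1 = some a ∧ θ 2 = some b := by
  obtain ⟨⟨a, b⟩, hab, hθ⟩ := hvalid.2 ({1, 2}, allowedPlans) rfl hfull
  have h₁ := congrFun hθ 1
  have h₂ := congrFun hθ 2
  simp only [restrictTo, plan_apply] at h₁ h₂
  exact ⟨a, b, hab, by simpa using h₁, by simpa using h₂⟩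

theorem eq_partner_of_valid {θ : ℕ → Option ℕ} (hfull : ∀ s ∈ policy.S, θ s ≠ none)
    (hvalid : policy.Valid θ) {s s' u u' : ℕ} (hs : s ∈ policy.S) (hs' : s' ∈ policy.S)
    (hne : s ≠ s') (hu : θ s = some u) (hu' : θ s' = some u') (hu0 : u ≠ 0) (hu0' : u' ≠ 0) :
    u' = partner u := by
  obtain ⟨a, b, hab, ha, hb⟩ := exists_compatible_of_valid hfull hvalid
  simp only [policy, Finset.mem_insert, Finset.mem_singleton] at hs hs'
  have := partner_eq_of_mem_compatiblePairs _ hab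
  rcases hs with rfl | rfl <;> rcases hs' with rfl | rfl <;> simp_all

theorem not_decrementallyResilient : ¬ policy.DecrementallyResilient 2 := by
  intro h
  rcases h with ⟨hfull, -⟩ | ⟨-, h⟩
  · exact hfull 1 (by simp [policy]) rfl
  obtain ⟨θ₁, ⟨s, u, hs, -, -, hu0, rfl, -⟩, hwin⟩ :=
    h {0} ⟨by simp, by simp [policy], by simp⟩
  obtain ⟨s', hs', hss'⟩ : ∃ s' ∈ policy.S, s' ≠ s := by
    simp only [policy, Finset.mem_insert, Finset.mem_singleton] at hs
    rcases hs with rfl | rfl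
    exacts [⟨2, by simp [policy], by decide⟩, ⟨1, by simp [policy], by decide⟩]
  rcases hwin with ⟨hfull, -⟩ | ⟨-, hwin⟩
  · exact hfull s' hs' (by simp [hss'])
  obtain ⟨θ₂, ⟨s'', u'', hs'', hfree, -, hu''Δ, rfl, -⟩, hfull, -, hvalid⟩ :=
    hwin {0, partner u} ⟨by simp, by simp [policy, Finset.insert_subset_iff, partner_lt_eight],
      Finset.card_insert_le _ _⟩
  have hne : s ≠ s'' := by
    rintro rfl
    simp at hfree
  simp only [Finset.mem_insert, Finset.mem_singleton, not_or] at hu0 hu''Δ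
  exact hu''Δ.2 (eq_partner_of_valid hfull hvalid hs hs'' hne
    (by simp [Function.update_of_ne hne]) (by simp) hu0 hu''Δ.1)

end OneShotNotDecremental

/-- There exist a workflow authorization policy `W` and a
budget `t ≥ 0` such that `W` is one-shot resilient for budget `t` but not
decrementally resilient for budget `t`. -/
theorem exists_oneShot_resilient_not_decrementally_resilient :
    ∃ (W : WAP ℕ ℕ) (t : ℕ), W.WellFormed ∧
      W.OneShotResilient t ∧ ¬ W.DecrementallyResilient t :=
  ⟨_, 2, OneShotNotDecremental.wellFormed, OneShotNotDecremental.oneShotResilient,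
    OneShotNotDecremental.not_decrementallyResilient⟩
end

section
/- Let W = (S, ≼, U, A, C) be a workflow authorization policy and let (s, u) be a pair such that the singleton function {(s, u)} is a valid partial plan of W. Then a function θ' : S ∖ {s} → U is a valid plan of project(W, s, u) if and only if the function θ' ∪ {(s, u)} : S → U is a valid plan of W. -/
namespace WAP

variable {σ υ : Type} [DecidableEq σ] [DecidableEq υ]

/-- The partial function `θ_τ` determined by a sequence `τ ∈ (S × U)*`. -/
def planOf : List (σ × υ) → σ → Option υ
  | [], _ => none
  | (s, u) :: rest, s' => if s' = s then some u else planOf rest s'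

/-- A sequence is functional if no step occurs more than once in it. -/
def Functional (τ : List (σ × υ)) : Prop := (τ.map Prod.fst).Nodup

/-- A play: a functional sequence `τ` such that `θ_τ` is a valid partial plan. -/
def IsPlay (W : WAP σ υ) (τ : List (σ × υ)) : Prop :=
  Functional τ ∧ W.IsPartialPlan (planOf τ) ∧ W.Valid (planOf τ)

/-- A terminus: a play `π` with `dom(θ_π) = S`. -/
def IsTerminus (W : WAP σ υ) (π : List (σ × υ)) : Prop :=
  W.IsPlay π ∧ ∀ s ∈ W.S, planOf π s ≠ none

/-- A strike `(τ, Δ)`: `τ` is a play with `dom(θ_τ) ≠ S` (the trigger),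
`Δ ⊆ U` and `|Δ| ≤ t`. -/
def IsStrike (W : WAP σ υ) (t : ℕ) (τ : List (σ × υ)) (Δ : Finset υ) : Prop :=
  W.IsPlay τ ∧ (∃ s ∈ W.S, planOf τ s = none) ∧ Δ ⊆ W.U ∧ Δ.card ≤ t

/-- The strike `(τ, Δ)` invalidates the terminus `π`: `τ` is a prefix of `π`
and no user from `Δ` is assigned by `π` after the moves in `τ`. -/
def Invalidates (τ : List (σ × υ)) (Δ : Finset υ) (π : List (σ × υ)) : Prop :=
  τ <+: π ∧ ∀ p ∈ π.drop τ.length, p.2 ∉ Δ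

/-- The strike `(τ, Δ)` is successful: it invalidates every terminus having
its trigger `τ` as a prefix. -/
def SuccessfulStrike (W : WAP σ υ) (t : ℕ) (τ : List (σ × υ)) (Δ : Finset υ) : Prop :=
  W.IsStrike t τ Δ ∧ ∀ π, W.IsTerminus π → τ <+: π → Invalidates τ Δ π

/-- The singleton partial function `{(s, u)}`. -/
def single (s : σ) (u : υ) : σ → Option υ :=
  fun s' => if s' = s then some u else none

/-- The projection `project(W, s, u)` of a workflow authorization policy. -/
def project (W : WAP σ υ) (s : σ) (u : υ) : WAP σ υ where
  S := W.S.erase s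
  ord := fun a b => W.ord a b ∧ a ∈ W.S.erase s ∧ b ∈ W.S.erase s
  U := W.U
  A := {p | p ∈ W.A ∧ p.1 ∈ W.S.erase s}
  C := {c | c ∈ W.C ∧ s ∉ c.1} ∪
       {c' | ∃ c ∈ W.C, s ∈ c.1 ∧ 1 < c.1.card ∧
          c' = (c.1.erase s,
                {θ' | ∃ θ ∈ c.2, θ s = some u ∧ θ' = restrictTo θ (c.1.erase s)})}

/-- Iterated projection along a sequence of assignments. -/
def projectSeq (W : WAP σ υ) (τ : List (σ × υ)) : WAP σ υ :=
  τ.foldl (fun W' p => W'.project p.1 p.2) W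

end WAP

/-!
Write `θ = θ' ∪ {(s, u)}`. Constraints of `W` not involving `s` survive the projection
unchanged, and `θ` agrees with `θ'` on their steps. A constraint `(T, Θ)` with `s ∈ T` is
satisfied by `θ` iff `θ'|_{T ∖ {s}}` is the restriction of a member of `Θ` taking the value
`u` at `s`, i.e. iff `θ'` satisfies the projected constraint `(T ∖ {s}, Θ⟨s,u⟩)`; when
`T = {s}` there is no projected constraint, but `θ` agrees with the valid plan `{(s, u)}` on `T`.
-/

namespace WAP

variable {σ υ : Type}

theorem isPlan_iff (W : WAP σ υ) {θ : σ → Option υ} :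
    W.IsPlan θ ↔ (∀ x v, θ x = some v → x ∈ W.S ∧ v ∈ W.U) ∧ ∀ x ∈ W.S, θ x ≠ none :=
  ⟨fun h => ⟨h.1.1, h.2⟩, fun h => ⟨⟨h.1, fun _ _ _ h₂ _ _ _ => h.2 _ h₂⟩, h.2⟩⟩

variable [DecidableEq σ]

section restrictTo

variable {θ θ₁ θ₂ φ : σ → Option υ} {T T' : Finset σ}

theorem restrictTo_congr (h : ∀ x ∈ T, θ₁ x = θ₂ x) : restrictTo θ₁ T = restrictTo θ₂ T :=
  funext fun x => by
    unfold restrictTo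
    split_ifs with hx
    exacts [h x hx, rfl]

theorem restrictTo_restrictTo_of_subset (h : T' ⊆ T) :
    restrictTo (restrictTo θ T) T' = restrictTo θ T' :=
  restrictTo_congr fun _ hx => if_pos (h hx)

theorem restrictTo_eq_self_s6 (h : ∀ x, φ x ≠ none → x ∈ T) : restrictTo φ T = φ :=
  funext fun x => by
    unfold restrictTo
    split_ifs with hx
    · rfl
    · by_contra hφx
      exact hx (h x (Ne.symm hφx))

theorem restrictTo_update_mem_iff {Θ : Set (σ → Option υ)}
    (hΘ : ∀ φ ∈ Θ, ∀ x, φ x ≠ none → x ∈ T) {s : σ} (hs : s ∈ T) (a : Option υ) :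
    restrictTo (Function.update θ s a) T ∈ Θ ↔
      ∃ φ ∈ Θ, φ s = a ∧ restrictTo θ (T.erase s) = restrictTo φ (T.erase s) := by
  constructor
  · intro hθ
    refine ⟨_, hθ, by simp [restrictTo, hs], ?_⟩
    rw [restrictTo_restrictTo_of_subset (T.erase_subset s)]
    exact restrictTo_congr fun x hx => (Function.update_of_ne (T.ne_of_mem_erase hx) _ _).symm
  · rintro ⟨φ, hφ, hφs, hθφ⟩
    convert hφ
    rw [← restrictTo_eq_self_s6 (hΘ φ hφ)]
    refine restrictTo_congr fun x hx => ?_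
    rcases eq_or_ne x s with rfl | hxs
    · simp [hφs]
    · have hxT : x ∈ T.erase s := Finset.mem_erase.2 ⟨hxs, hx⟩
      simpa [restrictTo, hxT, hxs] using congrFun hθφ x

end restrictTo

def Satisfies (θ : σ → Option υ) (c : Finset σ × Set (σ → Option υ)) : Prop :=
  (∀ x ∈ c.1, θ x ≠ none) → restrictTo θ c.1 ∈ c.2

section Satisfies

variable {θ θ₁ θ₂ : σ → Option υ} {c : Finset σ × Set (σ → Option υ)} {s : σ}

theorem satisfies_congr (h : ∀ x ∈ c.1, θ₁ x = θ₂ x) : Satisfies θ₁ c ↔ Satisfies θ₂ c := by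
  unfold Satisfies
  rw [restrictTo_congr h]
  exact imp_congr_left (forall₂_congr fun x hx => by rw [h x hx])

theorem satisfies_update_of_notMem (hs : s ∉ c.1) (a : Option υ) :
    Satisfies (Function.update θ s a) c ↔ Satisfies θ c :=
  satisfies_congr fun _ hx => Function.update_of_ne (ne_of_mem_of_not_mem hx hs) _ _

theorem satisfies_update_iff_erase (hc : ∀ φ ∈ c.2, ∀ x, φ x ≠ none → x ∈ c.1) (hs : s ∈ c.1)
    (u : υ) :
    Satisfies (Function.update θ s (some u)) c ↔
      Satisfies θ (c.1.erase s,
        {θ' | ∃ φ ∈ c.2, φ s = some u ∧ θ' = restrictTo φ (c.1.erase s)}) := by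
  have hcover : (∀ x ∈ c.1, Function.update θ s (some u) x ≠ none) ↔
      ∀ x ∈ c.1.erase s, θ x ≠ none := by
    refine ⟨fun h x hx => ?_, fun h x hx => ?_⟩
    · simpa [Function.update_of_ne (Finset.ne_of_mem_erase hx)] using
        h x (Finset.mem_of_mem_erase hx)
    · rcases eq_or_ne x s with rfl | hxs
      · simp
      · simpa [hxs] using h x (Finset.mem_erase.2 ⟨hxs, hx⟩)
  unfold Satisfies
  rw [hcover, restrictTo_update_mem_iff hc hs]
  rfl

end Satisfies

variable {W : WAP σ υ} {s : σ} {u : υ} {θ' : σ → Option υ}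

theorem project_isPlan_iff (hs : s ∈ W.S) (hu : u ∈ W.U) (hθ's : θ' s = none) :
    (W.project s u).IsPlan θ' ↔ W.IsPlan (Function.update θ' s (some u)) := by
  rw [isPlan_iff, isPlan_iff,
    Function.forall_update_iff θ' fun x o => ∀ v, o = some v → x ∈ W.S ∧ v ∈ W.U,
    Function.forall_update_iff θ' fun x o => x ∈ W.S → o ≠ none]
  simp only [project, Finset.mem_erase]
  grind

theorem project_authorized_iff (hW : W.WellFormed) (hsu : (s, u) ∈ W.A) (hθ's : θ' s = none) :
    (∀ x v, θ' x = some v → (x, v) ∈ (W.project s u).A) ↔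
      ∀ x v, Function.update θ' s (some u) x = some v → (x, v) ∈ W.A := by
  rw [Function.forall_update_iff θ' fun x o => ∀ v, o = some v → (x, v) ∈ W.A]
  have hAS : ∀ x v, (x, v) ∈ W.A → x ∈ W.S := fun _ _ h => (hW.2.2.2.1 _ h).1
  simp only [project, Finset.mem_erase]
  grind

theorem project_satisfies_iff (hW : W.WellFormed) (hv : W.Valid (single s u)) :
    (∀ c ∈ (W.project s u).C, Satisfies θ' c) ↔
      ∀ c ∈ W.C, Satisfies (Function.update θ' s (some u)) c := by
  have hΘ : ∀ c ∈ W.C, ∀ φ ∈ c.2, ∀ x, φ x ≠ none → x ∈ c.1 :=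
    fun c hc φ hφ x => (((hW.2.2.2.2 c hc).2 φ hφ).1 x).1
  constructor
  · intro h c hc
    by_cases hsc : s ∈ c.1
    · by_cases hcard : 1 < c.1.card
      · exact (satisfies_update_iff_erase (hΘ c hc) hsc u).2
          (h _ (Or.inr ⟨c, hc, hsc, hcard, rfl⟩))
      · refine (satisfies_congr fun x hx => ?_).2 (hv.2 c hc)
        obtain rfl := Finset.card_le_one.1 (not_lt.1 hcard) x hx s hsc
        simp [single]
    · exact (satisfies_update_of_notMem hsc _).2 (h c (Or.inl ⟨hc, hsc⟩))
  · rintro h c' (⟨hc, hsc⟩ | ⟨c, hc, hsc, -, rfl⟩)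
    · exact (satisfies_update_of_notMem hsc _).1 (h c' hc)
    · exact (satisfies_update_iff_erase (hΘ c hc) hsc u).1 (h c hc)

theorem project_valid_iff (hW : W.WellFormed) (hv : W.Valid (single s u)) (hθ's : θ' s = none) :
    (W.project s u).Valid θ' ↔ W.Valid (Function.update θ' s (some u)) :=
  and_congr (project_authorized_iff hW (hv.1 s u (if_pos rfl)) hθ's) (project_satisfies_iff hW hv)

end WAP

theorem project_validPlan_iff_general
    {σ υ : Type} [DecidableEq σ]
    (W : WAP σ υ) (hW : W.WellFormed) (s : σ) (u : υ)
    (hpp : W.IsPartialPlan (WAP.single s u)) (hv : W.Valid (WAP.single s u))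
    (θ' : σ → Option υ)
    (hdom : ∀ x, θ' x ≠ none ↔ x ∈ W.S.erase s) :
    (W.project s u).IsValidPlan θ' ↔
      W.IsValidPlan (Function.update θ' s (some u)) := by
  obtain ⟨hs, hu⟩ := hpp.1 s u (if_pos rfl)
  have hθ's : θ' s = none := by
    by_contra h
    exact W.S.notMem_erase s ((hdom s).1 h)
  exact and_congr (WAP.project_isPlan_iff hs hu hθ's) (WAP.project_valid_iff hW hv hθ's)

/-- Suppose the singleton function `{(s, u)}` is a valid
partial plan of `W`.  A function `θ' : S ∖ {s} → U` is a valid plan of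
`project(W, s, u)` if and only if `θ' ∪ {(s, u)} : S → U` is a valid plan
of `W`. -/
theorem project_validPlan_iff
    {σ υ : Type} [DecidableEq σ] [DecidableEq υ]
    (W : WAP σ υ) (hW : W.WellFormed) (s : σ) (u : υ)
    (hpp : W.IsPartialPlan (WAP.single s u)) (hv : W.Valid (WAP.single s u))
    (θ' : σ → Option υ)
    (hdom : ∀ x, θ' x ≠ none ↔ x ∈ W.S.erase s)
    (hran : ∀ x v, θ' x = some v → v ∈ W.U) :
    (W.project s u).IsValidPlan θ' ↔
      W.IsValidPlan (Function.update θ' s (some u)) :=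
  project_validPlan_iff_general W hW s u hpp hv θ' hdom
end

section
/- Let G = (V, E) be a finite simple undirected graph with N = |V| ≥ 3, let B ⊆ E, let t = ⌊|B|/2⌋, and let W_{G,B} be the workflow authorization policy constructed from (G, B). Then a plan θ of W_{G,B} is valid if and only if, writing θ(sv_i) = (v_i, j_i) and θ(se_i) = (e_i, l_i) for 1 ≤ i ≤ N, the sequence v₁, e₁, v₂, e₂, …, v_N, e_N is a Hamiltonian cycle of G. In particular, W_{G,B} is satisfiable if and only if G has a Hamiltonian cycle. -/
section GraphConstruction

open WAP

variable {V : Type} [Fintype V] [DecidableEq V]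

/-- A user of `W_{G,B}`: either a vertex user `(v, j)` or an edge user `(e, l)`. -/
abbrev UserGB (V : Type) := Sum (V × ℕ) (Sym2 V × ℕ)

/-- The successor index modulo `N` (so `sv_{i+1}` after `sv_i`, wrapping around). -/
def nextFin {N : ℕ} (i : Fin N) : Fin N :=
  ⟨(i.1 + 1) % N, Nat.mod_lt _ (Nat.lt_of_le_of_lt (Nat.zero_le _) i.isLt)⟩

/-- The type-1 entailment constraint `ent(ρ, s, s')`: the constraint
`({s, s'}, Θ)` where `Θ` is the set of functions `θ : {s, s'} → U` with
`(θ(s), θ(s')) ∈ ρ`. -/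
def entCon {σ υ : Type} [DecidableEq σ] (U : Finset υ) (ρ : υ → υ → Prop)
    (s s' : σ) : Finset σ × Set (σ → Option υ) :=
  ({s, s'},
   {θ | (∀ x, θ x ≠ none ↔ x ∈ ({s, s'} : Finset σ)) ∧
        (∀ x v, θ x = some v → v ∈ U) ∧
        ∃ a b, θ s = some a ∧ θ s' = some b ∧ ρ a b})

/-- The vertex users: `(v, j)` for `v ∈ V` and `1 ≤ j ≤ t+1`. -/
def UVfin (V : Type) [Fintype V] [DecidableEq V] (t : ℕ) : Finset (UserGB V) :=
  (Finset.univ ×ˢ Finset.Icc 1 (t + 1)).image Sum.inl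

/-- The edge users: `(e, l)` for `e ∈ E`, with `1 ≤ l ≤ t+1` if `e ∉ B` and
`l = 1` if `e ∈ B`. -/
def UEfin (G : SimpleGraph V) [DecidableRel G.Adj] (B : Finset (Sym2 V))
    (t : ℕ) : Finset (UserGB V) :=
  (G.edgeFinset.biUnion
    (fun e => ({e} : Finset (Sym2 V)) ×ˢ
      (if e ∈ B then ({1} : Finset ℕ) else Finset.Icc 1 (t + 1)))).image Sum.inr

/-- `incident`: relates an edge user `(e, l)` to a vertex user `(v, j)` where
`v` is one of the two endpoints of `e`. -/
def incidentRel (G : SimpleGraph V) : UserGB V → UserGB V → Prop :=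
  fun a b => ∃ e l v j, a = Sum.inr (e, l) ∧ b = Sum.inl (v, j) ∧
    e ∈ G.edgeSet ∧ v ∈ e

/-- `distinct`: relates vertex users representing distinct vertices. -/
def distinctRel (V : Type) : UserGB V → UserGB V → Prop :=
  fun a b => ∃ v i w j, a = Sum.inl (v, i) ∧ b = Sum.inl (w, j) ∧ v ≠ w

/-- The workflow authorization policy `W_{G,B}` built from a finite simple
graph `G = (V, E)` and an edge set `B ⊆ E`, with budget `t = ⌊|B|/2⌋`.
Steps: `Sum.inl i` is `sv_{i+1}` and `Sum.inr i` is `se_{i+1}` (0-indexed),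
the order `≼` is equality.  Constraints:  `C₁ ∪ C₂ ∪ C₃ ∪ C_ham` where
`C₁ = {ent(incident⁻¹, sv_i, se_i)}`, `C₂ ∪ C₃ = {ent(incident, se_i, sv_{i+1 mod N})}`,
and `C_ham = {ent(distinct, sv_i, sv_j) : i < j}`. -/
def WGB (G : SimpleGraph V) [DecidableRel G.Adj] (B : Finset (Sym2 V)) :
    WAP (Sum (Fin (Fintype.card V)) (Fin (Fintype.card V))) (UserGB V) :=
  { S := Finset.univ
    ord := Eq
    U := UVfin V (B.card / 2) ∪ UEfin G B (B.card / 2)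
    A := {p | match p.1 with
              | Sum.inl _ => p.2 ∈ UVfin V (B.card / 2)
              | Sum.inr _ => p.2 ∈ UEfin G B (B.card / 2)}
    C := {c | ∃ i : Fin (Fintype.card V),
            c = entCon (UVfin V (B.card / 2) ∪ UEfin G B (B.card / 2))
                  (fun a b => incidentRel G b a) (Sum.inl i) (Sum.inr i)} ∪
         {c | ∃ i : Fin (Fintype.card V),
            c = entCon (UVfin V (B.card / 2) ∪ UEfin G B (B.card / 2))
                  (incidentRel G) (Sum.inr i) (Sum.inl (nextFin i))} ∪
         {c | ∃ i j : Fin (Fintype.card V), i < j ∧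
            c = entCon (UVfin V (B.card / 2) ∪ UEfin G B (B.card / 2))
                  (distinctRel V) (Sum.inl i) (Sum.inl j)} }

/-- `v₁, e₁, v₂, e₂, …, v_N, e_N` is a Hamiltonian cycle of `G`: the `v_i`
are pairwise distinct and cover all of `V`, and each `e_i` is an edge of `G`
joining `v_i` and `v_{i+1}` (indices modulo `N`). -/
def IsHamCycle (G : SimpleGraph V) (v : Fin (Fintype.card V) → V)
    (e : Fin (Fintype.card V) → Sym2 V) : Prop :=
  Function.Injective v ∧ (∀ x : V, ∃ i, v i = x) ∧
  ∀ i, e i ∈ G.edgeSet ∧ e i = s(v i, v (nextFin i))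

end GraphConstruction

/-!
An authorized plan sends vertex steps to vertex users `(v i, j)` and edge steps to edge users
`(e i, l)`, so it determines sequences `v` and `e`. The constraints of `C₁` and `C₂` say exactly
that `e i` is an edge containing `v i` and `v (i + 1)`, and those of `C_ham` that `v` is
injective, hence a bijection `Fin N ≃ V`. Then `v i ≠ v (i + 1)`, so `e i = s(v i, v (i + 1))`.
Conversely a Hamiltonian cycle, with all copy indices `1`, is a valid plan.
-/

theorem WAP.restrictTo_mem_entCon_iff {σ υ : Type} [DecidableEq σ] {U : Finset υ}
    {ρ : υ → υ → Prop} {s s' : σ} {θ : σ → Option υ} (hU : ∀ x u, θ x = some u → u ∈ U) :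
    WAP.restrictTo θ (entCon U ρ s s').1 ∈ (entCon U ρ s s').2 ↔
      ∃ a b, θ s = some a ∧ θ s' = some b ∧ ρ a b := by
  have hs : WAP.restrictTo θ {s, s'} s = θ s := if_pos (by simp)
  have hs' : WAP.restrictTo θ {s, s'} s' = θ s' := if_pos (by simp)
  simp only [entCon, Set.mem_ofPred_eq, hs, hs']
  refine ⟨fun h => h.2.2, fun h => ⟨fun x => ?_, fun x u hx => ?_, h⟩⟩
  · obtain ⟨a, b, ha, hb, -⟩ := h
    by_cases hx : x ∈ ({s, s'} : Finset σ)
    · simp only [WAP.restrictTo, hx, iff_true]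
      rcases Finset.mem_insert.mp hx with rfl | hx <;> simp_all
    · simp [WAP.restrictTo, hx]
  · simp only [WAP.restrictTo] at hx
    split_ifs at hx
    exact hU x u hx

section WGB

variable {V : Type}

theorem inr_notMem_UVfin [Fintype V] [DecidableEq V] {t : ℕ} {x : Sym2 V × ℕ} :
    Sum.inr x ∉ UVfin V t := by
  simp [UVfin]

theorem inl_notMem_UEfin [Fintype V] [DecidableEq V] {G : SimpleGraph V} [DecidableRel G.Adj]
    {B : Finset (Sym2 V)} {t : ℕ} {x : V × ℕ} : Sum.inl x ∉ UEfin G B t := by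
  simp [UEfin]

@[simp]
theorem incidentRel_inr_inl {G : SimpleGraph V} {e : Sym2 V} {l : ℕ} {v : V} {j : ℕ} :
    incidentRel G (Sum.inr (e, l)) (Sum.inl (v, j)) ↔ e ∈ G.edgeSet ∧ v ∈ e := by
  simp [incidentRel]

@[simp]
theorem distinctRel_inl_inl {v w : V} {i j : ℕ} :
    distinctRel V (Sum.inl (v, i)) (Sum.inl (w, j)) ↔ v ≠ w := by
  simp [distinctRel]

theorem nextFin_ne_self {N : ℕ} (hN : 1 < N) (i : Fin N) : nextFin i ≠ i := by
  intro h
  have h' : (i.1 + 1) % N = i.1 := congrArg Fin.val h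
  rcases Nat.lt_or_ge (i.1 + 1) N with hlt | hge
  · rw [Nat.mod_eq_of_lt hlt] at h'
    omega
  · rw [show i.1 + 1 = N by omega, Nat.mod_self] at h'
    omega

theorem isHamCycle_iff [Fintype V] {G : SimpleGraph V} {v : Fin (Fintype.card V) → V}
    {e : Fin (Fintype.card V) → Sym2 V} :
    IsHamCycle G v e ↔
      Function.Injective v ∧ ∀ i, e i ∈ G.edgeSet ∧ v i ∈ e i ∧ v (nextFin i) ∈ e i := by
  refine ⟨fun ⟨hinj, _, he⟩ => ⟨hinj, fun i => ?_⟩, fun ⟨hinj, he⟩ => ⟨hinj, ?_, fun i => ?_⟩⟩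
  · refine ⟨(he i).1, ?_, ?_⟩ <;> rw [(he i).2]
    exacts [Sym2.mem_mk_left _ _, Sym2.mem_mk_right _ _]
  · exact ((Fintype.bijective_iff_injective_and_card v).mpr ⟨hinj, Fintype.card_fin _⟩).2
  · obtain ⟨hE, hl, hr⟩ := he i
    -- an edge has two distinct ends, so `1 < N` and hence `nextFin i ≠ i`
    have hN : 1 < Fintype.card V := by
      obtain ⟨w, hw⟩ := Sym2.mem_iff_exists.mp hl
      rw [hw, SimpleGraph.mem_edgeSet] at hE
      exact Fintype.one_lt_card_iff.mpr ⟨v i, w, hE.ne⟩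
    have hne : v i ≠ v (nextFin i) := hinj.ne (nextFin_ne_self hN i).symm
    exact ⟨hE, (Sym2.mem_and_mem_iff hne).mp ⟨hl, hr⟩⟩

variable [Fintype V] [DecidableEq V] {G : SimpleGraph V} [DecidableRel G.Adj]
  {B : Finset (Sym2 V)}

theorem WGB_mem_A_iff {s : Fin (Fintype.card V) ⊕ Fin (Fintype.card V)} {u : UserGB V}
    (hu : u ∈ (WGB G B).U) : (s, u) ∈ (WGB G B).A ↔ s.isLeft = u.isLeft := by
  rcases Finset.mem_union.mp hu with hu | hu <;>
    rcases s with i | i <;> rcases u with x | x <;>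
    simp_all [WGB, inr_notMem_UVfin, inl_notMem_UEfin]

theorem WGB_authorized_iff {θ : Fin (Fintype.card V) ⊕ Fin (Fintype.card V) → Option (UserGB V)}
    (hθ : (WGB G B).IsPlan θ) :
    (∀ s u, θ s = some u → (s, u) ∈ (WGB G B).A) ↔
      ∃ (v : Fin (Fintype.card V) → V) (e : Fin (Fintype.card V) → Sym2 V),
        (∀ i, ∃ j, θ (Sum.inl i) = some (Sum.inl (v i, j))) ∧
        (∀ i, ∃ l, θ (Sum.inr i) = some (Sum.inr (e i, l))) := by
  have hA : ∀ s u, θ s = some u → ((s, u) ∈ (WGB G B).A ↔ s.isLeft = u.isLeft) :=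
    fun s u h => WGB_mem_A_iff (hθ.1.1 s u h).2
  have htot : ∀ s, ∃ u, θ s = some u :=
    fun s => Option.ne_none_iff_exists'.mp (hθ.2 s (Finset.mem_univ s))
  constructor
  · intro hauth
    have hv : ∀ i, ∃ x : V × ℕ, θ (Sum.inl i) = some (Sum.inl x) := fun i => by
      obtain ⟨u | u, hu⟩ := htot (Sum.inl i)
      · exact ⟨u, hu⟩
      · simpa using (hA _ _ hu).mp (hauth _ _ hu)
    have he : ∀ i, ∃ y : Sym2 V × ℕ, θ (Sum.inr i) = some (Sum.inr y) := fun i => by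
      obtain ⟨u | u, hu⟩ := htot (Sum.inr i)
      · simpa using (hA _ _ hu).mp (hauth _ _ hu)
      · exact ⟨u, hu⟩
    choose x hx using hv
    choose y hy using he
    exact ⟨fun i => (x i).1, fun i => (y i).1, fun i => ⟨(x i).2, hx i⟩, fun i => ⟨(y i).2, hy i⟩⟩
  · rintro ⟨v, e, hv, he⟩ (i | i) u hu <;> rw [hA _ _ hu]
    · obtain ⟨j, hj⟩ := hv i
      rw [Option.some.inj (hu.symm.trans hj)]
      rfl
    · obtain ⟨l, hl⟩ := he i
      rw [Option.some.inj (hu.symm.trans hl)]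
      rfl

theorem WGB_valid_iff {θ : Fin (Fintype.card V) ⊕ Fin (Fintype.card V) → Option (UserGB V)}
    (hθ : (WGB G B).IsPlan θ) :
    (WGB G B).Valid θ ↔
      (∀ s u, θ s = some u → (s, u) ∈ (WGB G B).A) ∧
        ∀ c ∈ (WGB G B).C, WAP.restrictTo θ c.1 ∈ c.2 :=
  and_congr_right' <| forall₂_congr fun _ _ =>
    forall_prop_of_true fun s _ => hθ.2 s (Finset.mem_univ s)

theorem WGB_constraints_iff_isHamCycle
    {θ : Fin (Fintype.card V) ⊕ Fin (Fintype.card V) → Option (UserGB V)}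
    (hθ : (WGB G B).IsPlan θ) {v : Fin (Fintype.card V) → V} {e : Fin (Fintype.card V) → Sym2 V}
    {j l : Fin (Fintype.card V) → ℕ} (hv : ∀ i, θ (Sum.inl i) = some (Sum.inl (v i, j i)))
    (he : ∀ i, θ (Sum.inr i) = some (Sum.inr (e i, l i))) :
    (∀ c ∈ (WGB G B).C, WAP.restrictTo θ c.1 ∈ c.2) ↔ IsHamCycle G v e := by
  have hU : ∀ x u, θ x = some u → u ∈ UVfin V (B.card / 2) ∪ UEfin G B (B.card / 2) :=
    fun x u h => (hθ.1.1 x u h).2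
  simp only [WGB, Set.mem_union, Set.mem_ofPred_eq, or_imp, forall_and, forall_exists_index,
    and_imp, forall_comm (α := Finset _ × Set _), forall_eq]
  simp only [WAP.restrictTo_mem_entCon_iff hU, hv, he, Option.some.injEq, exists_and_left,
    exists_eq_left', incidentRel_inr_inl, distinctRel_inl_inl, isHamCycle_iff]
  constructor
  · rintro ⟨⟨hleft, hright⟩, hdistinct⟩
    exact ⟨.of_lt_imp_ne hdistinct, fun i => ⟨(hleft i).1, (hleft i).2, (hright i).2⟩⟩
  · rintro ⟨hinj, hedge⟩
    exact ⟨⟨fun i => ⟨(hedge i).1, (hedge i).2.1⟩, fun i => ⟨(hedge i).1, (hedge i).2.2⟩⟩,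
      fun i j hij => hinj.ne hij.ne⟩

-- Every user has a copy `1`, the edge users of `B` included.
def hamPlan (v : Fin (Fintype.card V) → V) (e : Fin (Fintype.card V) → Sym2 V) :
    Fin (Fintype.card V) ⊕ Fin (Fintype.card V) → Option (UserGB V) :=
  Sum.elim (fun i => some (Sum.inl (v i, 1))) (fun i => some (Sum.inr (e i, 1)))

theorem isPlan_hamPlan {v : Fin (Fintype.card V) → V} {e : Fin (Fintype.card V) → Sym2 V}
    (he : ∀ i, e i ∈ G.edgeSet) : (WGB G B).IsPlan (hamPlan v e) := by
  refine ⟨⟨?_, fun s₁ s₂ _ _ _ h hne => absurd h hne⟩, fun s _ => by cases s <;> simp [hamPlan]⟩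
  rintro (i | i) u hu <;> simp only [hamPlan, Sum.elim_inl, Sum.elim_inr, Option.some.injEq] at hu <;>
    subst hu <;> refine ⟨Finset.mem_univ _, ?_⟩
  · simp [WGB, UVfin]
  · refine Finset.mem_union_right _ (Finset.mem_image_of_mem _
      (Finset.mem_biUnion.mpr ⟨e i, G.mem_edgeFinset.mpr (he i), ?_⟩))
    split_ifs <;> simp

theorem WGB_valid_iff_exists_isHamCycle
    {θ : Fin (Fintype.card V) ⊕ Fin (Fintype.card V) → Option (UserGB V)}
    (hθ : (WGB G B).IsPlan θ) :
    (WGB G B).Valid θ ↔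
      ∃ (v : Fin (Fintype.card V) → V) (e : Fin (Fintype.card V) → Sym2 V),
        (∀ i, ∃ j, θ (Sum.inl i) = some (Sum.inl (v i, j))) ∧
        (∀ i, ∃ l, θ (Sum.inr i) = some (Sum.inr (e i, l))) ∧
        IsHamCycle G v e := by
  rw [WGB_valid_iff hθ, WGB_authorized_iff hθ]
  constructor
  · rintro ⟨⟨v, e, hv, he⟩, hC⟩
    choose j hv' using hv
    choose l he' using he
    exact ⟨v, e, fun i => ⟨j i, hv' i⟩, fun i => ⟨l i, he' i⟩,
      (WGB_constraints_iff_isHamCycle hθ hv' he').mp hC⟩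
  · rintro ⟨v, e, hv, he, hham⟩
    choose j hv' using hv
    choose l he' using he
    exact ⟨⟨v, e, fun i => ⟨j i, hv' i⟩, fun i => ⟨l i, he' i⟩⟩,
      (WGB_constraints_iff_isHamCycle hθ hv' he').mpr hham⟩

end WGB

theorem WGB_valid_iff_hamCycle_general
    {V : Type} [Fintype V] [DecidableEq V]
    (G : SimpleGraph V) [DecidableRel G.Adj]
    (B : Finset (Sym2 V)) :
    (∀ θ, (WGB G B).IsPlan θ →
      ((WGB G B).Valid θ ↔
        ∃ (v : Fin (Fintype.card V) → V) (e : Fin (Fintype.card V) → Sym2 V),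
          (∀ i, ∃ j, θ (Sum.inl i) = some (Sum.inl (v i, j))) ∧
          (∀ i, ∃ l, θ (Sum.inr i) = some (Sum.inr (e i, l))) ∧
          IsHamCycle G v e)) ∧
    ((∃ θ, (WGB G B).IsValidPlan θ) ↔
      ∃ (v : Fin (Fintype.card V) → V) (e : Fin (Fintype.card V) → Sym2 V),
        IsHamCycle G v e) := by
  refine ⟨fun θ hθ => WGB_valid_iff_exists_isHamCycle hθ, ?_, ?_⟩
  · rintro ⟨θ, hθ, hvalid⟩
    obtain ⟨v, e, -, -, hham⟩ := (WGB_valid_iff_exists_isHamCycle hθ).mp hvalid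
    exact ⟨v, e, hham⟩
  · rintro ⟨v, e, hham⟩
    have hθ : (WGB G B).IsPlan (hamPlan v e) := isPlan_hamPlan fun i => (hham.2.2 i).1
    exact ⟨hamPlan v e, hθ, (WGB_valid_iff_exists_isHamCycle hθ).mpr
      ⟨v, e, fun i => ⟨1, rfl⟩, fun i => ⟨1, rfl⟩, hham⟩⟩

/-- A plan `θ` of `W_{G,B}` is valid iff, writing
`θ(sv_i) = (v_i, j_i)` and `θ(se_i) = (e_i, l_i)`, the sequence
`v₁, e₁, v₂, e₂, …, v_N, e_N` is a Hamiltonian cycle of `G`.  In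
particular, `W_{G,B}` is satisfiable iff `G` has a Hamiltonian cycle. -/
theorem WGB_valid_iff_hamCycle
    {V : Type} [Fintype V] [DecidableEq V]
    (G : SimpleGraph V) [DecidableRel G.Adj]
    (hN : 3 ≤ Fintype.card V)
    (B : Finset (Sym2 V)) (hB : ↑B ⊆ G.edgeSet) :
    (∀ θ, (WGB G B).IsPlan θ →
      ((WGB G B).Valid θ ↔
        ∃ (v : Fin (Fintype.card V) → V) (e : Fin (Fintype.card V) → Sym2 V),
          (∀ i, ∃ j, θ (Sum.inl i) = some (Sum.inl (v i, j))) ∧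
          (∀ i, ∃ l, θ (Sum.inr i) = some (Sum.inr (e i, l))) ∧
          IsHamCycle G v e)) ∧
    ((∃ θ, (WGB G B).IsValidPlan θ) ↔
      ∃ (v : Fin (Fintype.card V) → V) (e : Fin (Fintype.card V) → Sym2 V),
        IsHamCycle G v e) :=
  WGB_valid_iff_hamCycle_general G B
end
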